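/- arXiv:2510.17580 — 2 statements merged into one kernel-verified Lean document; each statement's English description precedes it below -/
import Mathlib

section
/- Define A(θ) = θ²(1-θ)/2 (RHS-affected linear boundary error coefficient) and B(θ) = (θ(1+θ)(1-θ)²)/4 (RHS-affected quadratic boundary error coefficient). Then A(θ) < B(θ) for θ ∈ (0, √2 - 1) and A(θ) > B(θ) for θ ∈ (√2 - 1, 1), with equality exactly at θ = √2 - 1 ≈ 0.414. -/
/-!
The difference of the two coefficients factors as
`B θ - A θ = θ (1 - θ) (1 - 2θ - θ²) / 4 = θ (1 - θ) (√2 + 1 + θ) (√2 - 1 - θ) / 4`.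
On `(0, 1)` every factor except `√2 - 1 - θ` is positive, so `B - A` has the sign of `√2 - 1 - θ`.
-/

open Real

noncomputable section

namespace EmbeddedBoundary

def linearCoeff (θ : ℝ) : ℝ := θ ^ 2 * (1 - θ) / 2

def quadraticCoeff (θ : ℝ) : ℝ := θ * (1 + θ) * (1 - θ) ^ 2 / 4

def coeffGapFactor (θ : ℝ) : ℝ := θ * (1 - θ) * (√2 + 1 + θ) / 4

lemma quadraticCoeff_sub_linearCoeff (θ : ℝ) :
    quadraticCoeff θ - linearCoeff θ = coeffGapFactor θ * (√2 - 1 - θ) := by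
  have hsq : √2 ^ 2 = 2 := sq_sqrt zero_le_two
  unfold quadraticCoeff linearCoeff coeffGapFactor
  linear_combination (-(θ * (1 - θ)) / 4) * hsq

variable {θ : ℝ}

lemma coeffGapFactor_pos (h₀ : 0 < θ) (h₁ : θ < 1) : 0 < coeffGapFactor θ := by
  unfold coeffGapFactor
  have : 0 < 1 - θ := sub_pos.mpr h₁
  positivity

lemma linearCoeff_lt_quadraticCoeff_iff (h₀ : 0 < θ) (h₁ : θ < 1) :
    linearCoeff θ < quadraticCoeff θ ↔ θ < √2 - 1 := by
  rw [← sub_pos, quadraticCoeff_sub_linearCoeff,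
    mul_pos_iff_of_pos_left (coeffGapFactor_pos h₀ h₁), sub_pos]

lemma quadraticCoeff_lt_linearCoeff_iff (h₀ : 0 < θ) (h₁ : θ < 1) :
    quadraticCoeff θ < linearCoeff θ ↔ √2 - 1 < θ := by
  rw [← sub_neg, quadraticCoeff_sub_linearCoeff, ← neg_pos, ← mul_neg,
    mul_pos_iff_of_pos_left (coeffGapFactor_pos h₀ h₁), neg_pos, sub_neg]

lemma linearCoeff_eq_quadraticCoeff_iff (h₀ : 0 < θ) (h₁ : θ < 1) :
    linearCoeff θ = quadraticCoeff θ ↔ θ = √2 - 1 := by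
  rw [eq_comm, ← sub_eq_zero, quadraticCoeff_sub_linearCoeff,
    mul_eq_zero, or_iff_right (coeffGapFactor_pos h₀ h₁).ne', sub_eq_zero, eq_comm]

lemma sqrt_two_sub_one_mem_Ioo : √2 - 1 ∈ Set.Ioo (0 : ℝ) 1 := by
  constructor <;> linarith [one_lt_sqrt_two, sqrt_two_lt_three_halves]

end EmbeddedBoundary

end

open EmbeddedBoundary in
theorem stmt_9 :
    (∀ θ ∈ Set.Ioo (0:ℝ) (Real.sqrt 2 - 1),
        θ ^ 2 * (1 - θ) / 2 < θ * (1 + θ) * (1 - θ) ^ 2 / 4) ∧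
    (∀ θ ∈ Set.Ioo (Real.sqrt 2 - 1) (1:ℝ),
        θ ^ 2 * (1 - θ) / 2 > θ * (1 + θ) * (1 - θ) ^ 2 / 4) ∧
    (∀ θ ∈ Set.Ioo (0:ℝ) 1,
        θ ^ 2 * (1 - θ) / 2 = θ * (1 + θ) * (1 - θ) ^ 2 / 4 ↔ θ = Real.sqrt 2 - 1) := by
  obtain ⟨hr₀, hr₁⟩ := sqrt_two_sub_one_mem_Ioo
  refine ⟨fun θ ⟨h₀, h⟩ => ?_, fun θ ⟨h, h₁⟩ => ?_, fun θ ⟨h₀, h₁⟩ => ?_⟩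
  · exact (linearCoeff_lt_quadraticCoeff_iff h₀ (h.trans hr₁)).mpr h
  · exact (quadraticCoeff_lt_linearCoeff_iff (hr₀.trans h) h₁).mpr h
  · exact linearCoeff_eq_quadraticCoeff_iff h₀ h₁
end

section
/- Let τ_1,...,τ_{N-1} ∈ ℝ, θ_L, θ_R ∈ (0,1], and define for 1 ≤ i ≤ N-1: ξ_i = Δ²[((i+θ_L-1)/(N+θ_L+θ_R-2) - 1)·Σ_{k=1}^{N-1}(k+θ_L-1)τ_k - Σ_{k=i+1}^{N-1}(i-k)τ_k]. Then ξ satisfies the discrete system (ξ_{i-1} - 2ξ_i + ξ_{i+1})/Δ² = τ_i for 2 ≤ i ≤ N-2, together with the linear boundary closures H_{1/2} = ξ_1/(θ_LΔ) and H_{N-1/2} = -ξ_{N-1}/(θ_RΔ), where H_{i±1/2} are the consecutive divided differences of ξ. -/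
/-!
Up to the factor `Δ²`, `ξ_i` is the affine function `((i + θL - 1) / D - 1) S`, where
`D = N + θL + θR - 2` and `S = ∑_k (k + θL - 1) τ_k`, minus the moment `T_i = ∑_{k > i} (i - k) τ_k`.
The first difference `T_{i+1} - T_i = ∑_{k > i} τ_k` drops by `τ_i` at node `i`, which gives the
interior equations. Read with a real variable `x` in place of `i`, the formula vanishes at the
embedded boundary points `x = 1 - θL` and `x = N - 1 + θR`; the two closures say exactly that the
linear extrapolations of `ξ` vanish there.
-/

open Finset

lemma sum_Icc_sub_sum_Icc_succ {G : Type*} [AddCommGroup G] (f : ℕ → G) {a b : ℕ} (h : a ≤ b) :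
    ∑ k ∈ Icc a b, f k - ∑ k ∈ Icc (a + 1) b, f k = f a := by
  rw [← add_sum_Ioc_eq_sum_Icc h, Icc_add_one_left_eq_Ioc, add_sub_cancel_right]

noncomputable def tailMoment (τ : ℕ → ℝ) (M i : ℕ) : ℝ :=
  ∑ k ∈ Icc (i + 1) M, ((i : ℝ) - k) * τ k

namespace tailMoment

variable (τ : ℕ → ℝ) (M : ℕ)

lemma eq_sum_Icc (i : ℕ) : tailMoment τ M i = ∑ k ∈ Icc i M, ((i : ℝ) - k) * τ k := by
  refine sum_subset (Icc_subset_Icc_left i.le_succ) fun k hk hk' => ?_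
  have : k = i := by simp only [mem_Icc] at hk hk'; omega
  simp [this]

lemma succ_sub (i : ℕ) :
    tailMoment τ M (i + 1) - tailMoment τ M i = ∑ k ∈ Icc (i + 1) M, τ k := by
  rw [eq_sum_Icc, tailMoment, ← sum_sub_distrib]
  refine sum_congr rfl fun k _ => ?_
  push_cast
  ring

lemma of_le {i : ℕ} (h : M ≤ i) : tailMoment τ M i = 0 :=
  sum_eq_zero fun k hk => by simp only [mem_Icc] at hk; omega

end tailMoment

noncomputable def errorProfile (N : ℕ) (Δ θL θR : ℝ) (τ : ℕ → ℝ) (i : ℕ) : ℝ :=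
  Δ ^ 2 * ((((i : ℝ) + θL - 1) / ((N : ℝ) + θL + θR - 2) - 1) *
      ∑ k ∈ Icc 1 (N - 1), ((k : ℝ) + θL - 1) * τ k - tailMoment τ (N - 1) i)

namespace errorProfile

variable (N : ℕ) (Δ θL θR : ℝ) (τ : ℕ → ℝ)

local notation "ξ" => errorProfile N Δ θL θR τ

lemma succ_sub (i : ℕ) :
    ξ (i + 1) - ξ i = Δ ^ 2 * ((∑ k ∈ Icc 1 (N - 1), ((k : ℝ) + θL - 1) * τ k) /
      ((N : ℝ) + θL + θR - 2) - ∑ k ∈ Icc (i + 1) (N - 1), τ k) := by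
  have hT := tailMoment.succ_sub τ (N - 1) i
  rw [errorProfile, errorProfile]
  push_cast
  linear_combination (-Δ ^ 2) * hT

lemma second_diff {i : ℕ} (hi : i + 1 ≤ N - 1) :
    ξ i - 2 * ξ (i + 1) + ξ (i + 2) = Δ ^ 2 * τ (i + 1) := by
  have hjump := sum_Icc_sub_sum_Icc_succ τ hi
  linear_combination succ_sub N Δ θL θR τ (i + 1) - succ_sub N Δ θL θR τ i + Δ ^ 2 * hjump

lemma left_closure (hN : 2 ≤ N) : θL * (ξ 2 - ξ 1) - ξ 1 = θL * Δ ^ 2 * τ 1 := by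
  have hjump := sum_Icc_sub_sum_Icc_succ τ (show 1 ≤ N - 1 by omega)
  have hT : ∑ k ∈ Icc 1 (N - 1), ((k : ℝ) + θL - 1) * τ k + tailMoment τ (N - 1) 1
      = θL * ∑ k ∈ Icc 1 (N - 1), τ k := by
    rw [tailMoment.eq_sum_Icc, ← sum_add_distrib, mul_sum]
    exact sum_congr rfl fun k _ => by push_cast; ring
  rw [succ_sub, errorProfile]
  linear_combination Δ ^ 2 * hT + θL * Δ ^ 2 * hjump

lemma right_closure (hN : 2 ≤ N) (hD : (N : ℝ) + θL + θR - 2 ≠ 0) :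
    -ξ (N - 1) - θR * (ξ (N - 1) - ξ (N - 2)) = θR * Δ ^ 2 * τ (N - 1) := by
  have hlast : ξ (N - 1) = -θR * Δ ^ 2 * (∑ k ∈ Icc 1 (N - 1), ((k : ℝ) + θL - 1) * τ k) /
      ((N : ℝ) + θL + θR - 2) := by
    rw [errorProfile, tailMoment.of_le _ _ le_rfl, Nat.cast_sub (by omega)]
    field_simp
    ring
  have hstep := succ_sub N Δ θL θR τ (N - 2)
  rw [show N - 2 + 1 = N - 1 by omega, Icc_self, sum_singleton] at hstep
  linear_combination -hlast - θR * hstep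

end errorProfile

theorem stmt_12 (N : ℕ) (hN : 4 ≤ N) (Δ θL θR : ℝ) (hΔ : 0 < Δ)
    (hθL : θL ∈ Set.Ioc (0:ℝ) 1) (hθR : θR ∈ Set.Ioc (0:ℝ) 1) (τ ξ : ℕ → ℝ)
    (hξ : ∀ i, ξ i = Δ ^ 2 *
      ((((i : ℝ) + θL - 1) / ((N : ℝ) + θL + θR - 2) - 1) *
          ∑ k ∈ Finset.Icc 1 (N - 1), ((k : ℝ) + θL - 1) * τ k
        - ∑ k ∈ Finset.Icc (i + 1) (N - 1), ((i : ℝ) - (k : ℝ)) * τ k)) :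
    (∀ i, 2 ≤ i → i ≤ N - 2 →
      (ξ (i - 1) - 2 * ξ i + ξ (i + 1)) / Δ ^ 2 = τ i) ∧
    ((ξ 2 - ξ 1) / Δ - ξ 1 / (θL * Δ)) / Δ = τ 1 ∧
    (-ξ (N - 1) / (θR * Δ) - (ξ (N - 1) - ξ (N - 2)) / Δ) / Δ = τ (N - 1) := by
  obtain ⟨hθL, -⟩ := hθL
  obtain ⟨hθR, -⟩ := hθR
  have hD : (N : ℝ) + θL + θR - 2 ≠ 0 := by
    have : (4 : ℝ) ≤ N := by exact_mod_cast hN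
    linarith
  obtain rfl : ξ = errorProfile N Δ θL θR τ := funext hξ
  refine ⟨fun i hi₂ hiN => ?_, ?_, ?_⟩
  · obtain ⟨j, rfl⟩ : ∃ j, i = j + 1 := ⟨i - 1, by omega⟩
    rw [Nat.add_sub_cancel, div_eq_iff (by positivity)]
    linear_combination errorProfile.second_diff N Δ θL θR τ (i := j) (by omega)
  · field_simp
    linear_combination errorProfile.left_closure N Δ θL θR τ (by omega)
  · field_simp
    linear_combination errorProfile.right_closure N Δ θL θR τ (by omega) hD
end
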